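/- Let G be a graph with maximum degree at most 5 and let v be a vertex of degree 4 whose neighborhood contains at least three edges forming a path v1v2, v2v3, v3v4 among its neighbors v1, v2, v3, v4. Then d_2(v) ≤ 14. -/
import Mathlib

/-- Two vertices are within distance 2: adjacent or sharing a common neighbor. -/
def within2 {V : Type} (G : SimpleGraph V) (u w : V) : Prop :=
  G.Adj u w ∨ ∃ x, G.Adj u x ∧ G.Adj x w

/-- `d2 G v` is the number of vertices other than `v` at distance at most 2 from `v`. -/
noncomputable def d2 {V : Type} (G : SimpleGraph V) (v : V) : ℕ :=
  Set.ncard {u | u ≠ v ∧ within2 G u v}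

theorem stmt7 {V : Type} [Fintype V] (G : SimpleGraph V) [DecidableRel G.Adj]
    (hΔ : ∀ v, G.degree v ≤ 5) (v v1 v2 v3 v4 : V)
    (hdeg : G.degree v = 4)
    (h1 : G.Adj v v1) (h2 : G.Adj v v2) (h3 : G.Adj v v3) (h4 : G.Adj v v4)
    (h12 : v1 ≠ v2) (h13 : v1 ≠ v3) (h14 : v1 ≠ v4)
    (h23 : v2 ≠ v3) (h24 : v2 ≠ v4) (h34 : v3 ≠ v4)
    (e12 : G.Adj v1 v2) (e23 : G.Adj v2 v3) (e34 : G.Adj v3 v4) :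
    d2 G v ≤ 14 := by
  classical
  have hn1 : v ≠ v1 := G.ne_of_adj h1
  have hn2 : v ≠ v2 := G.ne_of_adj h2
  have hn3 : v ≠ v3 := G.ne_of_adj h3
  have hn4 : v ≠ v4 := G.ne_of_adj h4
  set B1 : Finset V := insert v1 (G.neighborFinset v1) with hB1
  set B2 : Finset V := insert v2 (G.neighborFinset v2) with hB2
  set B3 : Finset V := insert v3 (G.neighborFinset v3) with hB3
  set B4 : Finset V := insert v4 (G.neighborFinset v4) with hB4
  set U : Finset V := ((B1 ∪ B2) ∪ B3) ∪ B4 with hU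
  -- neighbors of v are exactly v1..v4
  have hNv : G.neighborFinset v = {v1, v2, v3, v4} := by
    refine (Finset.eq_of_subset_of_card_le ?_ ?_).symm
    · intro x hx
      simp only [Finset.mem_insert, Finset.mem_singleton] at hx
      rcases hx with rfl | rfl | rfl | rfl <;>
        simp [SimpleGraph.mem_neighborFinset, h1, h2, h3, h4]
    · have hc : ({v1, v2, v3, v4} : Finset V).card = 4 := by
        rw [Finset.card_insert_of_notMem (by simp [h12, h13, h14]),
          Finset.card_insert_of_notMem (by simp [h23, h24]),
          Finset.card_insert_of_notMem (by simp [h34]), Finset.card_singleton]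
      rw [hc, ← hdeg]; rfl
  -- subset
  have hsub : {u | u ≠ v ∧ within2 G u v} ⊆ ↑(U.erase v) := by
    intro u hu
    obtain ⟨hune, hw⟩ := hu
    simp only [Finset.coe_erase, Set.mem_diff, Finset.mem_coe, Set.mem_singleton_iff]
    refine ⟨?_, hune⟩
    have key : ∀ x, G.Adj v x → ∀ w, (w = x ∨ G.Adj x w) → w ∈ U := by
      intro x hx w hw
      have hx' : x ∈ G.neighborFinset v := by simpa [SimpleGraph.mem_neighborFinset] using hx
      rw [hNv] at hx'
      simp only [Finset.mem_insert, Finset.mem_singleton] at hx'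
      have hwB : ∀ y, x = y → w ∈ insert y (G.neighborFinset y) := by
        rintro y rfl
        rcases hw with rfl | hw
        · exact Finset.mem_insert_self _ _
        · exact Finset.mem_insert_of_mem (by simpa [SimpleGraph.mem_neighborFinset] using hw)
      rcases hx' with rfl | rfl | rfl | rfl
      · exact Finset.mem_union_left _ (Finset.mem_union_left _ (Finset.mem_union_left _ (hwB _ rfl)))
      · exact Finset.mem_union_left _ (Finset.mem_union_left _ (Finset.mem_union_right _ (hwB _ rfl)))
      · exact Finset.mem_union_left _ (Finset.mem_union_right _ (hwB _ rfl))
      · exact Finset.mem_union_right _ (hwB _ rfl)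
    rcases hw with huv | ⟨x, hux, hxv⟩
    · exact key u huv.symm u (Or.inl rfl)
    · exact key x hxv.symm u (Or.inr hux.symm)
  -- cardinality bounds
  have hd : ∀ w, (G.neighborFinset w).card ≤ 5 := fun w => hΔ w
  have hcard1 : B1.card ≤ 6 := le_trans (Finset.card_insert_le _ _) (by simpa using Nat.succ_le_succ (hd v1))
  -- B2 \ B1 ≤ 3
  have hsd2 : B2 \ B1 ⊆ ((G.neighborFinset v2).erase v).erase v1 := by
    intro u hu
    simp only [Finset.mem_sdiff, hB1, hB2, Finset.mem_insert, SimpleGraph.mem_neighborFinset,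
      not_or] at hu
    obtain ⟨hu2, hu1, hadj1⟩ := hu
    have huv2 : G.Adj v2 u := by
      rcases hu2 with rfl | h
      · exact absurd e12 hadj1
      · exact h
    refine Finset.mem_erase.2 ⟨?_, Finset.mem_erase.2 ⟨?_, by simpa [SimpleGraph.mem_neighborFinset] using huv2⟩⟩
    · exact hu1
    · rintro rfl; exact hadj1 h1.symm
  have hsd3 : B3 \ B2 ⊆ ((G.neighborFinset v3).erase v).erase v2 := by
    intro u hu
    simp only [Finset.mem_sdiff, hB2, hB3, Finset.mem_insert, SimpleGraph.mem_neighborFinset,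
      not_or] at hu
    obtain ⟨hu3, hu2, hadj2⟩ := hu
    have huv3 : G.Adj v3 u := by
      rcases hu3 with rfl | h
      · exact absurd e23 hadj2
      · exact h
    refine Finset.mem_erase.2 ⟨hu2, Finset.mem_erase.2 ⟨?_, by simpa [SimpleGraph.mem_neighborFinset] using huv3⟩⟩
    rintro rfl; exact hadj2 h2.symm
  have hsd4 : B4 \ B3 ⊆ ((G.neighborFinset v4).erase v).erase v3 := by
    intro u hu
    simp only [Finset.mem_sdiff, hB3, hB4, Finset.mem_insert, SimpleGraph.mem_neighborFinset,
      not_or] at hu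
    obtain ⟨hu4, hu3, hadj3⟩ := hu
    have huv4 : G.Adj v4 u := by
      rcases hu4 with rfl | h
      · exact absurd e34 hadj3
      · exact h
    refine Finset.mem_erase.2 ⟨hu3, Finset.mem_erase.2 ⟨?_, by simpa [SimpleGraph.mem_neighborFinset] using huv4⟩⟩
    rintro rfl; exact hadj3 h3.symm
  have herase_card : ∀ (a b : V) (s : Finset V), a ≠ b → a ∈ s → b ∈ s → s.card ≤ 5 →
      ((s.erase a).erase b).card ≤ 3 := by
    intro a b s hab ha hb hs
    have hb' : b ∈ s.erase a := Finset.mem_erase.2 ⟨hab.symm, hb⟩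
    rw [Finset.card_erase_of_mem hb', Finset.card_erase_of_mem ha]
    omega
  have hc2 : (B2 \ B1).card ≤ 3 := le_trans (Finset.card_le_card hsd2)
    (herase_card v v1 _ hn1 (by simp [SimpleGraph.mem_neighborFinset, h2.symm])
      (by simp [SimpleGraph.mem_neighborFinset, e12.symm]) (hd v2))
  have hc3 : (B3 \ B2).card ≤ 3 := le_trans (Finset.card_le_card hsd3)
    (herase_card v v2 _ hn2 (by simp [SimpleGraph.mem_neighborFinset, h3.symm])
      (by simp [SimpleGraph.mem_neighborFinset, e23.symm]) (hd v3))
  have hc4 : (B4 \ B3).card ≤ 3 := le_trans (Finset.card_le_card hsd4)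
    (herase_card v v3 _ hn3 (by simp [SimpleGraph.mem_neighborFinset, h4.symm])
      (by simp [SimpleGraph.mem_neighborFinset, e34.symm]) (hd v4))
  -- union bound
  have cu : ∀ (s t : Finset V), (s ∪ t).card = (t \ s).card + s.card := by
    intro s t
    rw [Finset.union_comm, ← Finset.card_sdiff_add_card]
  have hU12 : (B1 ∪ B2).card ≤ 9 := by rw [cu]; omega
  have hU123 : ((B1 ∪ B2) ∪ B3).card ≤ 12 := by
    rw [cu]
    have : B3 \ (B1 ∪ B2) ⊆ B3 \ B2 := Finset.sdiff_subset_sdiff (le_refl _) Finset.subset_union_right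
    have := Finset.card_le_card this
    omega
  have hUcard : U.card ≤ 15 := by
    rw [hU, cu]
    have : B4 \ ((B1 ∪ B2) ∪ B3) ⊆ B4 \ B3 := Finset.sdiff_subset_sdiff (le_refl _) Finset.subset_union_right
    have := Finset.card_le_card this
    omega
  have hvU : v ∈ U := by
    have : v ∈ B1 := Finset.mem_insert_of_mem (by simp [SimpleGraph.mem_neighborFinset, h1.symm])
    exact Finset.mem_union_left _ (Finset.mem_union_left _ (Finset.mem_union_left _ this))
  have hUe : (U.erase v).card ≤ 14 := by
    rw [Finset.card_erase_of_mem hvU]; omega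
  calc d2 G v ≤ (U.erase v).card := by
        rw [d2, ← Set.ncard_coe_finset (U.erase v)]
        exact Set.ncard_le_ncard hsub (Finset.finite_toSet _)
    _ ≤ 14 := hUe
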